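/- (Geometric increase of majorants.) Let r ≥ 1, E > 0, a > 0. Let Z₀ = Σ_{j=1}^n i ω_j u_j v_j for some ω ∈ ℝⁿ; let Z_s ∈ P_{s+2} for 1 ≤ s ≤ r−1 and f_s ∈ P_{s+2} for s ≥ r satisfy ‖Z_s‖ ≤ E a^{s+2} (1 ≤ s ≤ r−1) and ‖f_s‖ ≤ E a^{s+2} (s ≥ r). Let χ ∈ P_{r+2}, with expansion χ = Σ c_{k,k̃} u^k v^k̃ and D = Σ |c_{k,k̃}| · max_j max(k_j, k̃_j), solve the homological equation L_χ Z₀ + f_r = Z_r, where Z_r = Σ_{2|ℓ|=r+2} (coefficient of u^ℓ v^ℓ in f_r) u^ℓ v^ℓ is the part of f_r supported on monomials with equal exponents. Define the new terms, for s ≥ r+1: f'_s = f_s + Σ_{j≥1, 0≤m≤r−1, m+jr=s} (1/j!) L_χ^j Z_m + Σ_{j≥1, m≥r, m+jr=s} (1/j!) L_χ^j f_m, where Z₀ is used for m = 0. Set a_r = a·(1 + (r+1)D/a^r)^{1/r}. Then ‖Z_s‖ ≤ E a_r^{s+2} for 1 ≤ s ≤ r and ‖f'_s‖ ≤ E a_r^{s+2}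 for all s ≥ r+1. -/

import Mathlib

/-!
Each Lie derivative `L_χ` raises degrees by `r` and multiplies the norm of a homogeneous
polynomial of degree `t` by at most `D t`. So the term `L_χ^j g_m / j!` with `m + j r = s`
(`g_m` being `Z_m` or `f_m`) has norm at most `E a^(m+2) D^j ∏_{i<j} (m+2+ir) / j!`; as each
factor `m+2+ir` is below `r (N - j + 1 + i)` with `N = ⌊(s+2)/r⌋`, this is at most
`E a^(s+2) C(N,j) x^j` for `x = (r+1) D / a^r`. Summing over `j` gives
`‖f'_s‖ ≤ E a^(s+2) (1+x)^N ≤ E a_r^(s+2)`.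

The term with `m = 0` (when `s = K r`) needs care: by the homological equation it equals
`L_χ^(K-1) (Z_r - f_r) / K!`, with one factor `D` too few. It is merged with the `j = K - 1` term
into `L_χ^(K-1) (f_r + (Z_r - f_r) / K) / (K-1)!`, whose argument interpolates between `f_r`
and its normal part and hence has norm at most `‖f_r‖`.
-/

open MvPolynomial

/-- The Poisson bracket `{f,g} = ∑_j (∂f/∂v_j ∂g/∂u_j − ∂f/∂u_j ∂g/∂v_j)`. -/
noncomputable def poissonBracket (n : ℕ) (f g : MvPolynomial (Fin n ⊕ Fin n) ℂ) :
    MvPolynomial (Fin n ⊕ Fin n) ℂ :=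
  ∑ j : Fin n,
    (pderiv (Sum.inr j) f * pderiv (Sum.inl j) g -
      pderiv (Sum.inl j) f * pderiv (Sum.inr j) g)

/-- The ℓ¹-norm `‖f‖ = ∑ |c_{ℓ,ℓ̃}|` of the coefficients of a polynomial. -/
noncomputable def polyNorm (n : ℕ) (f : MvPolynomial (Fin n ⊕ Fin n) ℂ) : ℝ :=
  ∑ d ∈ f.support, ‖coeff d f‖

/-- The constant `D = ∑_{k,k̃} |c_{k,k̃}| · max_j max(k_j, k̃_j)`. -/
noncomputable def Dconst (n : ℕ) (χ : MvPolynomial (Fin n ⊕ Fin n) ℂ) : ℝ :=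
  ∑ d ∈ χ.support,
    ‖coeff d χ‖ *
      ((Finset.univ.sup fun j : Fin n => max (d (Sum.inl j)) (d (Sum.inr j)) : ℕ) : ℝ)

/-- The quadratic Hamiltonian `Z₀ = ∑_j i ω_j u_j v_j` of `n` harmonic oscillators. -/
noncomputable def oscHam (n : ℕ) (ω : Fin n → ℝ) : MvPolynomial (Fin n ⊕ Fin n) ℂ :=
  ∑ j : Fin n, C (Complex.I * (ω j : ℂ)) * (X (Sum.inl j) * X (Sum.inr j))

open Classical in
/-- The part of `f` supported on monomials `u^ℓ v^ℓ` with equal exponents. -/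
noncomputable def normalPart (n : ℕ) (f : MvPolynomial (Fin n ⊕ Fin n) ℂ) :
    MvPolynomial (Fin n ⊕ Fin n) ℂ :=
  ∑ d ∈ f.support.filter fun d => ∀ j : Fin n, d (Sum.inl j) = d (Sum.inr j),
    monomial d (coeff d f)

/-- The new common ratio `a_r = a (1 + (r+1) D / a^r)^{1/r}` of the geometric majorants. -/
noncomputable def newRatio (r : ℕ) (a D : ℝ) : ℝ :=
  a * (1 + ((r : ℝ) + 1) * D / a ^ r) ^ ((r : ℝ)⁻¹)

open Finset

section PolyNorm

variable {n : ℕ}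

lemma polyNorm_nonneg (f : MvPolynomial (Fin n ⊕ Fin n) ℂ) : 0 ≤ polyNorm n f :=
  sum_nonneg fun _ _ => norm_nonneg _

lemma polyNorm_eq_sum_of_support_subset {f : MvPolynomial (Fin n ⊕ Fin n) ℂ}
    {T : Finset ((Fin n ⊕ Fin n) →₀ ℕ)} (h : f.support ⊆ T) :
    polyNorm n f = ∑ d ∈ T, ‖coeff d f‖ :=
  sum_subset h fun d _ hd => by rw [notMem_support_iff.mp hd, norm_zero]

lemma polyNorm_le_of_norm_coeff_le {f g : MvPolynomial (Fin n ⊕ Fin n) ℂ}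
    (h : ∀ d, ‖coeff d f‖ ≤ ‖coeff d g‖) : polyNorm n f ≤ polyNorm n g := by
  have hsupp : f.support ⊆ g.support := fun d hd => by
    rw [mem_support_iff, ← norm_pos_iff] at hd ⊢
    exact hd.trans_le (h d)
  rw [polyNorm_eq_sum_of_support_subset hsupp, polyNorm]
  exact sum_le_sum fun d _ => h d

lemma polyNorm_add_le (f g : MvPolynomial (Fin n ⊕ Fin n) ℂ) :
    polyNorm n (f + g) ≤ polyNorm n f + polyNorm n g := by
  rw [polyNorm_eq_sum_of_support_subset support_add,
    polyNorm_eq_sum_of_support_subset (subset_union_left (s₂ := g.support)),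
    polyNorm_eq_sum_of_support_subset (subset_union_right (s₁ := f.support)),
    ← sum_add_distrib]
  exact sum_le_sum fun d _ => by simpa only [coeff_add] using norm_add_le _ _

lemma polyNorm_sum_le {ι : Type*} (s : Finset ι) (F : ι → MvPolynomial (Fin n ⊕ Fin n) ℂ) :
    polyNorm n (∑ i ∈ s, F i) ≤ ∑ i ∈ s, polyNorm n (F i) := by
  classical
  induction s using Finset.induction_on with
  | empty => simp [polyNorm]
  | insert i s hi ih =>
    rw [sum_insert hi, sum_insert hi]
    exact (polyNorm_add_le _ _).trans (add_le_add le_rfl ih)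

lemma polyNorm_smul (c : ℂ) (f : MvPolynomial (Fin n ⊕ Fin n) ℂ) :
    polyNorm n (c • f) = ‖c‖ * polyNorm n f := by
  rw [polyNorm_eq_sum_of_support_subset support_smul, polyNorm, mul_sum]
  simp only [coeff_smul, smul_eq_mul, norm_mul]

lemma polyNorm_neg (f : MvPolynomial (Fin n ⊕ Fin n) ℂ) : polyNorm n (-f) = polyNorm n f := by
  simpa using polyNorm_smul (-1) f

lemma polyNorm_sub_le (f g : MvPolynomial (Fin n ⊕ Fin n) ℂ) :
    polyNorm n (f - g) ≤ polyNorm n f + polyNorm n g := by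
  simpa only [sub_eq_add_neg, polyNorm_neg] using polyNorm_add_le f (-g)

lemma polyNorm_monomial (d : (Fin n ⊕ Fin n) →₀ ℕ) (c : ℂ) :
    polyNorm n (monomial d c) = ‖c‖ := by
  rw [polyNorm_eq_sum_of_support_subset support_monomial_subset, sum_singleton, coeff_monomial,
    if_pos rfl]

lemma polyNorm_mul_le (f g : MvPolynomial (Fin n ⊕ Fin n) ℂ) :
    polyNorm n (f * g) ≤ polyNorm n f * polyNorm n g := by
  conv_lhs => rw [f.as_sum, g.as_sum, sum_mul_sum]
  refine (polyNorm_sum_le _ _).trans ?_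
  rw [polyNorm, polyNorm, sum_mul_sum]
  refine sum_le_sum fun d _ => ?_
  refine (polyNorm_sum_le _ _).trans (sum_le_sum fun e _ => ?_)
  rw [monomial_mul, polyNorm_monomial, norm_mul]

end PolyNorm

section PoissonBracket

variable {n : ℕ}

lemma polyNorm_pderiv_le (i : Fin n ⊕ Fin n) (f : MvPolynomial (Fin n ⊕ Fin n) ℂ) :
    polyNorm n (pderiv i f) ≤ ∑ d ∈ f.support, (d i : ℝ) * ‖coeff d f‖ := by
  conv_lhs => rw [f.as_sum, map_sum]
  refine (polyNorm_sum_le _ _).trans (sum_le_sum fun d _ => ?_)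
  rw [pderiv_monomial, polyNorm_monomial, norm_mul, Complex.norm_natCast, mul_comm]

lemma sum_polyNorm_pderiv_le {t : ℕ} {f : MvPolynomial (Fin n ⊕ Fin n) ℂ}
    (hf : f.IsHomogeneous t) :
    ∑ i, polyNorm n (pderiv i f) ≤ t * polyNorm n f := by
  refine (sum_le_sum fun i _ => polyNorm_pderiv_le i f).trans_eq ?_
  rw [sum_comm, polyNorm, mul_sum]
  refine sum_congr rfl fun d hd => ?_
  rw [← sum_mul, ← Nat.cast_sum, ← Finsupp.degree_eq_sum, Finsupp.degree_apply,
    ← hf.degree_eq_sum_deg_support hd]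

def maxExponent (d : (Fin n ⊕ Fin n) →₀ ℕ) : ℕ :=
  univ.sup fun j : Fin n => max (d (Sum.inl j)) (d (Sum.inr j))

lemma le_maxExponent (d : (Fin n ⊕ Fin n) →₀ ℕ) : ∀ i, d i ≤ maxExponent d
  | .inl j => (le_max_left _ _).trans
      (le_sup (f := fun j : Fin n => max (d (Sum.inl j)) (d (Sum.inr j))) (mem_univ j))
  | .inr j => (le_max_right _ _).trans
      (le_sup (f := fun j : Fin n => max (d (Sum.inl j)) (d (Sum.inr j))) (mem_univ j))

lemma Dconst_eq (χ : MvPolynomial (Fin n ⊕ Fin n) ℂ) :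
    Dconst n χ = ∑ d ∈ χ.support, ‖coeff d χ‖ * maxExponent d :=
  rfl

lemma Dconst_nonneg (χ : MvPolynomial (Fin n ⊕ Fin n) ℂ) : 0 ≤ Dconst n χ :=
  sum_nonneg fun _ _ => mul_nonneg (norm_nonneg _) (Nat.cast_nonneg _)

lemma polyNorm_pderiv_monomial_le (i : Fin n ⊕ Fin n) (d : (Fin n ⊕ Fin n) →₀ ℕ) (c : ℂ) :
    polyNorm n (pderiv i (monomial d c)) ≤ ‖c‖ * maxExponent d := by
  rw [pderiv_monomial, polyNorm_monomial, norm_mul, Complex.norm_natCast]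
  gcongr
  exact_mod_cast le_maxExponent d i

lemma polyNorm_poissonBracket_monomial_le {t : ℕ} (d : (Fin n ⊕ Fin n) →₀ ℕ) (c : ℂ)
    {g : MvPolynomial (Fin n ⊕ Fin n) ℂ} (hg : g.IsHomogeneous t) :
    polyNorm n (poissonBracket n (monomial d c) g) ≤
      ‖c‖ * maxExponent d * (t * polyNorm n g) := by
  have hterm : ∀ i i' : Fin n ⊕ Fin n,
      polyNorm n (pderiv i (monomial d c) * pderiv i' g) ≤
        ‖c‖ * maxExponent d * polyNorm n (pderiv i' g) := fun i i' =>
    (polyNorm_mul_le _ _).trans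
      (mul_le_mul_of_nonneg_right (polyNorm_pderiv_monomial_le i d c) (polyNorm_nonneg _))
  calc polyNorm n (poissonBracket n (monomial d c) g)
      ≤ ∑ j : Fin n, ‖c‖ * maxExponent d *
          (polyNorm n (pderiv (Sum.inl j) g) + polyNorm n (pderiv (Sum.inr j) g)) := by
        rw [poissonBracket]
        refine (polyNorm_sum_le _ _).trans (sum_le_sum fun j _ => ?_)
        rw [mul_add]
        exact (polyNorm_sub_le _ _).trans (add_le_add (hterm _ _) (hterm _ _))
    _ = ‖c‖ * maxExponent d * ∑ i, polyNorm n (pderiv i g) := by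
        rw [← mul_sum, Fintype.sum_sum_type, sum_add_distrib]
    _ ≤ ‖c‖ * maxExponent d * (t * polyNorm n g) := by
        gcongr
        exact sum_polyNorm_pderiv_le hg

lemma poissonBracket_sum_left {ι : Type*} (s : Finset ι)
    (F : ι → MvPolynomial (Fin n ⊕ Fin n) ℂ) (g : MvPolynomial (Fin n ⊕ Fin n) ℂ) :
    poissonBracket n (∑ i ∈ s, F i) g = ∑ i ∈ s, poissonBracket n (F i) g := by
  simp only [poissonBracket, map_sum, sum_mul, ← sum_sub_distrib]
  exact sum_comm

lemma polyNorm_poissonBracket_le {t : ℕ} (χ : MvPolynomial (Fin n ⊕ Fin n) ℂ)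
    {g : MvPolynomial (Fin n ⊕ Fin n) ℂ} (hg : g.IsHomogeneous t) :
    polyNorm n (poissonBracket n χ g) ≤ Dconst n χ * (t * polyNorm n g) := by
  conv_lhs => rw [χ.as_sum, poissonBracket_sum_left]
  rw [Dconst_eq, sum_mul]
  exact (polyNorm_sum_le _ _).trans
    (sum_le_sum fun d _ => polyNorm_poissonBracket_monomial_le d _ hg)

lemma isHomogeneous_poissonBracket {p q : ℕ} {χ g : MvPolynomial (Fin n ⊕ Fin n) ℂ}
    (hχ : χ.IsHomogeneous (p + 1)) (hg : g.IsHomogeneous (q + 1)) :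
    (poissonBracket n χ g).IsHomogeneous (p + q) := by
  have hχ' : ∀ i, (pderiv i χ).IsHomogeneous p := fun i => by simpa using hχ.pderiv (i := i)
  have hg' : ∀ i, (pderiv i g).IsHomogeneous q := fun i => by simpa using hg.pderiv (i := i)
  exact IsHomogeneous.sum _ _ _ fun _ _ =>
    ((hχ' _).mul (hg' _)).sub ((hχ' _).mul (hg' _))

end PoissonBracket

section LieSeries

open Nat

variable {𝕜 V : Type*} [Field 𝕜] [AddCommGroup V] [Module 𝕜 V]

lemma inv_factorial_smul_iterate_add (L : Module.End 𝕜 V) (k : ℕ) (g h : V) :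
    ((k ! : ℕ) : 𝕜)⁻¹ • L^[k] g + (((k + 1) ! : ℕ) : 𝕜)⁻¹ • L^[k + 1] h =
      ((k ! : ℕ) : 𝕜)⁻¹ • L^[k] (g + ((k + 1 : ℕ) : 𝕜)⁻¹ • L h) := by
  rw [Function.iterate_succ_apply, ← Module.End.coe_pow, map_add, map_smul, smul_add, smul_smul,
    factorial_succ, cast_mul, mul_inv, mul_comm]

lemma sum_Icc_inv_factorial_smul_iterate_merge_top (L : Module.End 𝕜 V) (k : ℕ) (u : ℕ → V) :
    ∑ j ∈ Icc 1 (k + 2), ((j ! : ℕ) : 𝕜)⁻¹ • L^[j] (u j) =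
      ∑ j ∈ Icc 1 (k + 1), ((j ! : ℕ) : 𝕜)⁻¹ •
        L^[j] (u j + if j = k + 1 then ((k + 2 : ℕ) : 𝕜)⁻¹ • L (u (k + 2)) else 0) := by
  rw [sum_Icc_succ_top (by omega : 1 ≤ k + 1 + 1), sum_Icc_succ_top (by omega : 1 ≤ k + 1),
    sum_Icc_succ_top (by omega : 1 ≤ k + 1), if_pos rfl, add_assoc,
    inv_factorial_smul_iterate_add]
  congr 1
  refine sum_congr rfl fun j hj => ?_
  rw [if_neg (by simp only [mem_Icc] at hj; omega), add_zero]

end LieSeries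

section LieDerivative

variable {n : ℕ}

noncomputable def lieDeriv (n : ℕ) (χ : MvPolynomial (Fin n ⊕ Fin n) ℂ) :
    Module.End ℂ (MvPolynomial (Fin n ⊕ Fin n) ℂ) where
  toFun := poissonBracket n χ
  map_add' g h := by
    simp only [poissonBracket, map_add, mul_add, ← sum_add_distrib]
    exact sum_congr rfl fun _ _ => by abel
  map_smul' c g := by
    simp only [poissonBracket, RingHom.id_apply, smul_sum]
    exact sum_congr rfl fun _ _ => by
      rw [Derivation.map_smul, Derivation.map_smul, mul_smul_comm, mul_smul_comm, smul_sub]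

variable {n : ℕ}

lemma coe_lieDeriv (χ : MvPolynomial (Fin n ⊕ Fin n) ℂ) : ⇑(lieDeriv n χ) = poissonBracket n χ :=
  rfl

variable {r m : ℕ} {χ g : MvPolynomial (Fin n ⊕ Fin n) ℂ}

lemma isHomogeneous_iterate_poissonBracket (hχ : χ.IsHomogeneous (r + 2))
    (hg : g.IsHomogeneous (m + 2)) (j : ℕ) :
    ((poissonBracket n χ)^[j] g).IsHomogeneous (m + 2 + j * r) := by
  induction j with
  | zero => simpa using hg
  | succ j ih =>
    rw [Function.iterate_succ_apply']
    have h := isHomogeneous_poissonBracket (p := r + 1) (q := m + 1 + j * r) hχ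
      (by simpa [add_right_comm] using ih)
    convert h using 1
    ring

lemma polyNorm_iterate_poissonBracket_le (hχ : χ.IsHomogeneous (r + 2))
    (hg : g.IsHomogeneous (m + 2)) (j : ℕ) :
    polyNorm n ((poissonBracket n χ)^[j] g) ≤
      Dconst n χ ^ j * (∏ i ∈ range j, ((m + 2 + i * r : ℕ) : ℝ)) * polyNorm n g := by
  induction j with
  | zero => simp
  | succ j ih =>
    rw [Function.iterate_succ_apply', prod_range_succ]
    calc polyNorm n (poissonBracket n χ ((poissonBracket n χ)^[j] g))
        ≤ Dconst n χ * ((m + 2 + j * r : ℕ) * polyNorm n ((poissonBracket n χ)^[j] g)) :=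
          polyNorm_poissonBracket_le χ (isHomogeneous_iterate_poissonBracket hχ hg j)
      _ ≤ Dconst n χ * ((m + 2 + j * r : ℕ) *
            (Dconst n χ ^ j * (∏ i ∈ range j, ((m + 2 + i * r : ℕ) : ℝ)) * polyNorm n g)) := by
          have := Dconst_nonneg χ
          gcongr
      _ = _ := by ring

end LieDerivative

section NormalPart

variable {n : ℕ}

lemma coeff_normalPart (f : MvPolynomial (Fin n ⊕ Fin n) ℂ) (d : (Fin n ⊕ Fin n) →₀ ℕ) :
    coeff d (normalPart n f) =
      if ∀ j : Fin n, d (Sum.inl j) = d (Sum.inr j) then coeff d f else 0 := by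
  classical
  simp only [normalPart, coeff_sum, coeff_monomial, sum_ite_eq', mem_filter, mem_support_iff]
  by_cases hd : coeff d f = 0 <;> simp [hd]

lemma isHomogeneous_normalPart {m : ℕ} {f : MvPolynomial (Fin n ⊕ Fin n) ℂ}
    (hf : f.IsHomogeneous m) : (normalPart n f).IsHomogeneous m := fun d hd => by
  rw [coeff_normalPart] at hd
  split_ifs at hd
  · exact hf hd
  · exact absurd rfl hd

lemma polyNorm_add_smul_normalPart_sub_le (f : MvPolynomial (Fin n ⊕ Fin n) ℂ) {c : ℂ}
    (hc : ‖1 - c‖ ≤ 1) : polyNorm n (f + c • (normalPart n f - f)) ≤ polyNorm n f := by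
  refine polyNorm_le_of_norm_coeff_le fun d => ?_
  rw [coeff_add, coeff_smul, coeff_sub, coeff_normalPart]
  split_ifs
  · simp
  · calc ‖coeff d f + c • (0 - coeff d f)‖ = ‖1 - c‖ * ‖coeff d f‖ := by
          rw [← norm_mul]; congr 1; simp only [smul_eq_mul]; ring
      _ ≤ ‖coeff d f‖ := mul_le_of_le_one_left (norm_nonneg _) hc

lemma polyNorm_normalPart_le (f : MvPolynomial (Fin n ⊕ Fin n) ℂ) :
    polyNorm n (normalPart n f) ≤ polyNorm n f := by
  simpa using polyNorm_add_smul_normalPart_sub_le f (c := 1) (by simp)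

end NormalPart

lemma sum_filter_add_sum_filter_eq_sum_ite {P M : Type*} [AddCommMonoid M] {r : ℕ} (hr : 1 ≤ r)
    (s : ℕ) (I : Finset ℕ) (T : ℕ → P → M) (Z f : ℕ → P) :
    ∑ j ∈ I.filter (fun j => s - j * r ≤ r - 1), T j (Z (s - j * r)) +
        ∑ j ∈ I.filter (fun j => r ≤ s - j * r), T j (f (s - j * r)) =
      ∑ j ∈ I, T j (if s - j * r < r then Z (s - j * r) else f (s - j * r)) := by
  rw [filter_congr (p := fun j => r ≤ s - j * r) (q := fun j => ¬ s - j * r ≤ r - 1)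
    (fun j _ => by omega), ← sum_ite]
  refine sum_congr rfl fun j _ => ?_
  split_ifs <;> first | rfl | omega


open Nat in
lemma prod_le_pow_mul_descFactorial {r m j N : ℕ} (hN : m + j * r + 2 < (N + 1) * r)
    (hj : j ≤ N) : ∏ i ∈ range j, (m + 2 + i * r) ≤ r ^ j * N.descFactorial j := by
  obtain ⟨q, rfl⟩ : ∃ q, N = q + j := ⟨N - j, by omega⟩
  rw [add_descFactorial_eq_ascFactorial, ascFactorial_eq_prod_range, pow_eq_prod_const,
    ← prod_mul_distrib]
  refine prod_le_prod' fun i _ => ?_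
  nlinarith

lemma norm_one_sub_inv_natCast_le_one (k : ℕ) : ‖1 - (k : ℂ)⁻¹‖ ≤ 1 := by
  rcases k.eq_zero_or_pos with rfl | hk
  · simp
  have hk' : (1 : ℝ) ≤ k := by exact_mod_cast hk
  have h : 1 - (k : ℂ)⁻¹ = ((1 - (k : ℝ)⁻¹ : ℝ) : ℂ) := by push_cast; rfl
  rw [h, Complex.norm_real, Real.norm_eq_abs, abs_le]
  constructor <;> linarith [inv_le_one_of_one_le₀ hk', inv_nonneg.mpr (zero_le_one.trans hk')]

lemma le_newRatio {r : ℕ} {a D : ℝ} (ha : 0 ≤ a) (hD : 0 ≤ D) : a ≤ newRatio r a D :=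
  le_mul_of_one_le_right ha
    (Real.one_le_rpow (le_add_of_nonneg_right (by positivity)) (by positivity))

lemma pow_mul_one_add_pow_le_newRatio_pow {r t N : ℕ} {a D : ℝ} (hr : 0 < r) (ha : 0 < a)
    (hD : 0 ≤ D) (hN : N * r ≤ t) :
    a ^ t * (1 + ((r : ℝ) + 1) * D / a ^ r) ^ N ≤ newRatio r a D ^ t := by
  set x := ((r : ℝ) + 1) * D / a ^ r
  have hx : 1 ≤ 1 + x := le_add_of_nonneg_right (by positivity)
  have hNt : (N : ℝ) ≤ (r : ℝ)⁻¹ * t := by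
    rw [inv_mul_eq_div, le_div_iff₀ (by exact_mod_cast hr)]
    exact_mod_cast hN
  rw [newRatio, mul_pow, ← Real.rpow_natCast ((1 + x) ^ (r : ℝ)⁻¹), ← Real.rpow_mul (by linarith),
    ← Real.rpow_natCast (1 + x)]
  gcongr

section Majorants

variable {n r : ℕ} {E a : ℝ} {χ : MvPolynomial (Fin n ⊕ Fin n) ℂ}

open Nat in
lemma polyNorm_inv_factorial_smul_iterate_le {m j s N : ℕ} {g : MvPolynomial (Fin n ⊕ Fin n) ℂ}
    (ha : 0 < a) (hχ : χ.IsHomogeneous (r + 2)) (hg : g.IsHomogeneous (m + 2))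
    (hgE : polyNorm n g ≤ E * a ^ (m + 2)) (hs : m + j * r = s) (hN : s + 2 < (N + 1) * r)
    (hj : j ≤ N) :
    polyNorm n (((j ! : ℕ) : ℂ)⁻¹ • (poissonBracket n χ)^[j] g) ≤
      E * a ^ (s + 2) * N.choose j * (((r : ℝ) + 1) * Dconst n χ / a ^ r) ^ j := by
  have hD := Dconst_nonneg χ
  have hEa : 0 ≤ E * a ^ (m + 2) := (polyNorm_nonneg g).trans hgE
  have hP : (∏ i ∈ range j, ((m + 2 + i * r : ℕ) : ℝ)) ≤
      ((r : ℝ) + 1) ^ j * (j ! * N.choose j) := by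
    have h := prod_le_pow_mul_descFactorial (hs ▸ hN) hj
    rw [descFactorial_eq_factorial_mul_choose] at h
    calc (∏ i ∈ range j, ((m + 2 + i * r : ℕ) : ℝ))
        = ((∏ i ∈ range j, (m + 2 + i * r) : ℕ) : ℝ) := by push_cast; rfl
      _ ≤ ((r ^ j * (j ! * N.choose j) : ℕ) : ℝ) := by exact_mod_cast h
      _ ≤ ((r : ℝ) + 1) ^ j * (j ! * N.choose j) := by push_cast; gcongr; linarith
  rw [polyNorm_smul, norm_inv, Complex.norm_natCast]
  calc (j ! : ℝ)⁻¹ * polyNorm n ((poissonBracket n χ)^[j] g)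
      ≤ (j ! : ℝ)⁻¹ * (Dconst n χ ^ j * (∏ i ∈ range j, ((m + 2 + i * r : ℕ) : ℝ)) *
          (E * a ^ (m + 2))) := by
        gcongr
        exact (polyNorm_iterate_poissonBracket_le hχ hg j).trans (by gcongr)
    _ ≤ (j ! : ℝ)⁻¹ * (Dconst n χ ^ j * (((r : ℝ) + 1) ^ j * (j ! * N.choose j)) *
          (E * a ^ (m + 2))) := by gcongr
    _ = E * a ^ (s + 2) * N.choose j * (((r : ℝ) + 1) * Dconst n χ / a ^ r) ^ j := by
        have hfac : (j ! : ℝ) ≠ 0 := by positivity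
        rw [← hs, show a ^ (m + j * r + 2) = a ^ (m + 2) * (a ^ r) ^ j by ring, div_pow,
          mul_pow]
        field_simp

open Nat in
lemma polyNorm_add_sum_inv_factorial_smul_iterate_le {s N J : ℕ} (hE : 0 ≤ E) (ha : 0 < a)
    (hχ : χ.IsHomogeneous (r + 2)) (hN : s + 2 < (N + 1) * r) (hJN : J ≤ N) (hJs : J * r ≤ s)
    {g₀ : MvPolynomial (Fin n ⊕ Fin n) ℂ} (hg₀ : polyNorm n g₀ ≤ E * a ^ (s + 2))
    {h : ℕ → MvPolynomial (Fin n ⊕ Fin n) ℂ}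
    (hh : ∀ j ∈ Icc 1 J, (h j).IsHomogeneous (s - j * r + 2) ∧
      polyNorm n (h j) ≤ E * a ^ (s - j * r + 2)) :
    polyNorm n (g₀ + ∑ j ∈ Icc 1 J, ((j ! : ℕ) : ℂ)⁻¹ • (poissonBracket n χ)^[j] (h j)) ≤
      E * a ^ (s + 2) * (1 + ((r : ℝ) + 1) * Dconst n χ / a ^ r) ^ N := by
  set x := ((r : ℝ) + 1) * Dconst n χ / a ^ r
  set B : ℕ → ℝ := fun j => E * a ^ (s + 2) * N.choose j * x ^ j
  have hB : ∀ j, 0 ≤ B j := fun j => by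
    have := Dconst_nonneg χ
    positivity
  have hterm : ∀ j ∈ Icc 1 J,
      polyNorm n (((j ! : ℕ) : ℂ)⁻¹ • (poissonBracket n χ)^[j] (h j)) ≤ B j := fun j hj => by
    have hjJ := (mem_Icc.mp hj).2
    have hjs : j * r ≤ s := (Nat.mul_le_mul_right r hjJ).trans hJs
    exact polyNorm_inv_factorial_smul_iterate_le ha hχ (hh j hj).1 (hh j hj).2
      (Nat.sub_add_cancel hjs) hN (hjJ.trans hJN)
  calc polyNorm n (g₀ + ∑ j ∈ Icc 1 J, ((j ! : ℕ) : ℂ)⁻¹ • (poissonBracket n χ)^[j] (h j))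
      ≤ B 0 + ∑ j ∈ Icc 1 J, B j := by
        refine (polyNorm_add_le _ _).trans (add_le_add (by simpa [B] using hg₀) ?_)
        exact (polyNorm_sum_le _ _).trans (sum_le_sum hterm)
    _ = ∑ j ∈ insert 0 (Icc 1 J), B j := (sum_insert (by simp)).symm
    _ ≤ ∑ j ∈ range (N + 1), B j := by
        refine sum_le_sum_of_subset_of_nonneg (fun j hj => ?_) fun j _ _ => hB j
        simp only [mem_insert, mem_Icc, mem_range] at hj ⊢
        omega
    _ = E * a ^ (s + 2) * (1 + x) ^ N := by
        rw [add_comm 1 x, add_pow, mul_sum]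
        refine sum_congr rfl fun j _ => ?_
        simp only [B, one_pow, mul_one]
        ring

lemma polyNorm_add_sum_inv_factorial_smul_iterate_le_of_eq_mul {k N : ℕ} (hr : 1 ≤ r)
    (hE : 0 ≤ E) (ha : 0 < a) (hχ : χ.IsHomogeneous (r + 2))
    (hN : (k + 2) * r + 2 < (N + 1) * r) (hkN : k + 2 ≤ N)
    {g₀ : MvPolynomial (Fin n ⊕ Fin n) ℂ} (hg₀ : polyNorm n g₀ ≤ E * a ^ ((k + 2) * r + 2))
    (g : ℕ → MvPolynomial (Fin n ⊕ Fin n) ℂ)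
    (hg : ∀ m, 1 ≤ m → (g m).IsHomogeneous (m + 2) ∧ polyNorm n (g m) ≤ E * a ^ (m + 2))
    (hL : poissonBracket n χ (g 0) = normalPart n (g r) - g r) :
    polyNorm n (g₀ + ∑ j ∈ Icc 1 (k + 2),
        ((j.factorial : ℂ)⁻¹) • (poissonBracket n χ)^[j] (g ((k + 2) * r - j * r))) ≤
      E * a ^ ((k + 2) * r + 2) * (1 + ((r : ℝ) + 1) * Dconst n χ / a ^ r) ^ N := by
  -- The `m = 0` term has one factor `D` too few: fold it into the `j = k + 1` term.
  rw [← coe_lieDeriv, sum_Icc_inv_factorial_smul_iterate_merge_top]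
  have hkr : (k + 2) * r = k * r + 2 * r := by ring
  refine polyNorm_add_sum_inv_factorial_smul_iterate_le hE ha hχ hN (by omega) (by nlinarith)
    hg₀ fun j hj => ?_
  split_ifs with hjk
  · subst hjk
    obtain ⟨hgr, hgrE⟩ := hg r hr
    have hm : (k + 2) * r - (k + 1) * r = r := by rw [← Nat.sub_mul]; simp
    rw [hm, Nat.sub_self, coe_lieDeriv, hL]
    exact ⟨hgr.add ((homogeneousSubmodule _ ℂ _).smul_mem _
        ((isHomogeneous_normalPart hgr).sub hgr)),
      (polyNorm_add_smul_normalPart_sub_le _ (norm_one_sub_inv_natCast_le_one _)).trans hgrE⟩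
  · have hjk : j * r ≤ k * r := Nat.mul_le_mul_right r (by simp only [mem_Icc] at hj; omega)
    rw [add_zero]
    exact hg _ (by omega)

lemma polyNorm_add_sum_inv_factorial_smul_iterate_le_newRatio {s : ℕ} (hr : 1 ≤ r)
    (hs : r + 1 ≤ s) (hE : 0 ≤ E) (ha : 0 < a) (hχ : χ.IsHomogeneous (r + 2))
    {g₀ : MvPolynomial (Fin n ⊕ Fin n) ℂ} (hg₀ : polyNorm n g₀ ≤ E * a ^ (s + 2))
    (g : ℕ → MvPolynomial (Fin n ⊕ Fin n) ℂ)
    (hg : ∀ m, 1 ≤ m → (g m).IsHomogeneous (m + 2) ∧ polyNorm n (g m) ≤ E * a ^ (m + 2))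
    (hL : poissonBracket n χ (g 0) = normalPart n (g r) - g r) :
    polyNorm n (g₀ + ∑ j ∈ Icc 1 (s / r),
        ((j.factorial : ℂ)⁻¹) • (poissonBracket n χ)^[j] (g (s - j * r))) ≤
      E * newRatio r a (Dconst n χ) ^ (s + 2) := by
  have hN : s + 2 < ((s + 2) / r + 1) * r := by
    simpa [add_mul] using Nat.lt_div_mul_add (a := s + 2) hr
  have hNs : (s + 2) / r * r ≤ s + 2 := Nat.div_mul_le_self (s + 2) r
  have hKN : s / r ≤ (s + 2) / r := Nat.div_le_div_right (by omega)
  have hKs : s / r * r ≤ s := Nat.div_mul_le_self s r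
  generalize (s + 2) / r = N at hN hNs hKN
  refine le_trans ?_ (mul_le_mul_of_nonneg_left
    (pow_mul_one_add_pow_le_newRatio_pow hr ha (Dconst_nonneg χ) hNs) hE)
  rw [← mul_assoc]
  by_cases hdvd : r ∣ s
  · obtain ⟨K, rfl⟩ := hdvd
    have hK : 2 ≤ K := by
      by_contra h
      interval_cases K <;> omega
    obtain ⟨k, rfl⟩ : ∃ k, K = k + 2 := ⟨K - 2, by omega⟩
    rw [mul_comm r, Nat.mul_div_cancel _ hr] at hKN ⊢
    rw [mul_comm r] at hN hg₀
    exact polyNorm_add_sum_inv_factorial_smul_iterate_le_of_eq_mul hr hE ha hχ hN hKN hg₀ g hg hL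
  · refine polyNorm_add_sum_inv_factorial_smul_iterate_le hE ha hχ hN hKN hKs hg₀
      fun j hj => hg _ ?_
    have hjs : j * r ≤ s := (Nat.mul_le_mul_right r (mem_Icc.mp hj).2).trans hKs
    by_contra h0
    exact hdvd ⟨j, by rw [mul_comm]; omega⟩

end Majorants

/-- The pairs `(j,m)` with `j ≥ 1`, `m + j r = s` are parametrized by `j ∈ [1, s/r]`,
`m = s - j r`; the first sum ranges over those with `0 ≤ m ≤ r-1` (with `Z 0` used for `m = 0`)
and the second over those with `m ≥ r`. -/
theorem stmt8_general (n : ℕ) (r : ℕ) (hr : 1 ≤ r) (E a : ℝ) (hE : 0 < E) (ha : 0 < a)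
    (Z f : ℕ → MvPolynomial (Fin n ⊕ Fin n) ℂ)
    (hZhom : ∀ s : ℕ, 1 ≤ s → s ≤ r - 1 → (Z s).IsHomogeneous (s + 2))
    (hZnorm : ∀ s : ℕ, 1 ≤ s → s ≤ r - 1 → polyNorm n (Z s) ≤ E * a ^ (s + 2))
    (hfhom : ∀ s : ℕ, r ≤ s → (f s).IsHomogeneous (s + 2))
    (hfnorm : ∀ s : ℕ, r ≤ s → polyNorm n (f s) ≤ E * a ^ (s + 2))
    (χ : MvPolynomial (Fin n ⊕ Fin n) ℂ) (hχ : χ.IsHomogeneous (r + 2))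
    (hZr : Z r = normalPart n (f r))
    (hHomEq : poissonBracket n χ (Z 0) + f r = Z r) :
    (∀ s : ℕ, 1 ≤ s → s ≤ r → polyNorm n (Z s) ≤ E * (newRatio r a (Dconst n χ)) ^ (s + 2)) ∧
      ∀ s : ℕ, r + 1 ≤ s →
        polyNorm n
            (f s
              + ∑ j ∈ (Finset.Icc 1 (s / r)).filter fun j => s - j * r ≤ r - 1,
                  ((j.factorial : ℂ)⁻¹) • (poissonBracket n χ)^[j] (Z (s - j * r))
              + ∑ j ∈ (Finset.Icc 1 (s / r)).filter fun j => r ≤ s - j * r,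
                  ((j.factorial : ℂ)⁻¹) • (poissonBracket n χ)^[j] (f (s - j * r))) ≤
          E * (newRatio r a (Dconst n χ)) ^ (s + 2) := by
  have hmajorant : ∀ t, E * a ^ t ≤ E * newRatio r a (Dconst n χ) ^ t := fun t => by
    gcongr
    exact le_newRatio ha.le (Dconst_nonneg χ)
  refine ⟨fun s hs hsr => ?_, fun s hs => ?_⟩
  · rcases hsr.lt_or_eq with hsr | rfl
    · exact (hZnorm s hs (by omega)).trans (hmajorant _)
    · rw [hZr]
      exact ((polyNorm_normalPart_le _).trans (hfnorm s le_rfl)).trans (hmajorant _)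
  rw [add_assoc, sum_filter_add_sum_filter_eq_sum_ite hr s _
    (fun j p => ((j.factorial : ℂ)⁻¹) • (poissonBracket n χ)^[j] p)]
  refine polyNorm_add_sum_inv_factorial_smul_iterate_le_newRatio hr hs hE.le ha hχ
    (hfnorm s (by omega)) (fun m => if m < r then Z m else f m) (fun m hm => ?_) ?_
  · split_ifs with hmr
    · exact ⟨hZhom m hm (by omega), hZnorm m hm (by omega)⟩
    · exact ⟨hfhom m (by omega), hfnorm m (by omega)⟩
  · rw [if_pos (by omega), if_neg (lt_irrefl r), ← hZr, ← hHomEq, add_sub_cancel_right]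

/-- Geometric increase of the majorants at the `r`-th normalization step.  The pairs
`(j,m)` with `j ≥ 1`, `m + j r = s` are parametrized by `j ∈ [1, s/r]`, `m = s - j r`;
the first sum ranges over those with `0 ≤ m ≤ r-1` (with `Z 0` used for `m = 0`) and the
second over those with `m ≥ r`. -/
theorem stmt8 (n : ℕ) (hn : 1 ≤ n) (r : ℕ) (hr : 1 ≤ r) (E a : ℝ) (hE : 0 < E) (ha : 0 < a)
    (ω : Fin n → ℝ)
    (Z f : ℕ → MvPolynomial (Fin n ⊕ Fin n) ℂ)
    (hZ0 : Z 0 = oscHam n ω)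
    (hZhom : ∀ s : ℕ, 1 ≤ s → s ≤ r - 1 → (Z s).IsHomogeneous (s + 2))
    (hZnorm : ∀ s : ℕ, 1 ≤ s → s ≤ r - 1 → polyNorm n (Z s) ≤ E * a ^ (s + 2))
    (hfhom : ∀ s : ℕ, r ≤ s → (f s).IsHomogeneous (s + 2))
    (hfnorm : ∀ s : ℕ, r ≤ s → polyNorm n (f s) ≤ E * a ^ (s + 2))
    (χ : MvPolynomial (Fin n ⊕ Fin n) ℂ) (hχ : χ.IsHomogeneous (r + 2))
    (hZr : Z r = normalPart n (f r))
    (hHomEq : poissonBracket n χ (Z 0) + f r = Z r) :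
    (∀ s : ℕ, 1 ≤ s → s ≤ r → polyNorm n (Z s) ≤ E * (newRatio r a (Dconst n χ)) ^ (s + 2)) ∧
      ∀ s : ℕ, r + 1 ≤ s →
        polyNorm n
            (f s
              + ∑ j ∈ (Finset.Icc 1 (s / r)).filter fun j => s - j * r ≤ r - 1,
                  ((j.factorial : ℂ)⁻¹) • (poissonBracket n χ)^[j] (Z (s - j * r))
              + ∑ j ∈ (Finset.Icc 1 (s / r)).filter fun j => r ≤ s - j * r,
                  ((j.factorial : ℂ)⁻¹) • (poissonBracket n χ)^[j] (f (s - j * r))) ≤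
          E * (newRatio r a (Dconst n χ)) ^ (s + 2) :=
  stmt8_general n r hr E a hE ha Z f hZhom hZnorm hfhom hfnorm χ hχ hZr hHomEq
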